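/- arXiv:1408.4110 — 2 statements merged into one kernel-verified Lean document; each statement's English description precedes it below -/
import Mathlib

section
/- For every n ≥ 2, the endomorphisms φ_{σ_k} of 𝒜_n satisfy the braid relations: φ_{σ_k} ∘ φ_{σ_{k+1}} ∘ φ_{σ_k} = φ_{σ_{k+1}} ∘ φ_{σ_k} ∘ φ_{σ_{k+1}} for 1 ≤ k ≤ n−2, and φ_{σ_i} ∘ φ_{σ_j} = φ_{σ_j} ∘ φ_{σ_i} whenever |i − j| ≥ 2; consequently σ_k ↦ φ_{σ_k} induces a group homomorphism φ from the braid group B_n to Aut(𝒜_n). -/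
open scoped TensorProduct

/-- Generator index set for the algebra `𝒜ₙ`: pairs `(i,j)` with `1 ≤ i,j ≤ n`, `i ≠ j`. -/
abbrev Idx (n : ℕ) : Type := {q : ℕ × ℕ // q.1 ≠ q.2 ∧ 1 ≤ q.1 ∧ q.1 ≤ n ∧ 1 ≤ q.2 ∧ q.2 ≤ n}

/-- `𝒜ₙ`, the free noncommutative unital `ℤ`-algebra on the generators `a_{ij}`. -/
abbrev FA (n : ℕ) : Type := FreeAlgebra ℤ (Idx n)

/-- The generator `a_{ij}` when the indices are in range (`1 ≤ i,j ≤ n`, `i ≠ j`); `0` otherwise. -/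
noncomputable def gen (n i j : ℕ) : FA n :=
  if h : i ≠ j ∧ 1 ≤ i ∧ i ≤ n ∧ 1 ≤ j ∧ j ≤ n then FreeAlgebra.ι ℤ (⟨(i, j), h⟩ : Idx n) else 0

/-- Image of the generator `a_{ij}` under `φ_{σ_k}`. -/
noncomputable def phiGenImg (n k i j : ℕ) : FA n :=
  if i = k then
    (if j = k + 1 then -gen n (k+1) k
     else gen n (k+1) j - gen n (k+1) k * gen n k j)
  else if i = k + 1 then
    (if j = k then -gen n k (k+1) else gen n k j)
  else
    if j = k then gen n i (k+1) - gen n i k * gen n k (k+1)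
    else if j = k + 1 then gen n i k
    else gen n i j

/-- Image of the generator `a_{ij}` under `φ_{σ_k}⁻¹ = φ_{σ_k⁻¹}`. -/
noncomputable def phiInvGenImg (n k i j : ℕ) : FA n :=
  if i = k + 1 then
    (if j = k then -gen n k (k+1)
     else gen n k j - gen n k (k+1) * gen n (k+1) j)
  else if i = k then
    (if j = k + 1 then -gen n (k+1) k else gen n (k+1) j)
  else
    if j = k + 1 then gen n i k - gen n i (k+1) * gen n (k+1) k
    else if j = k then gen n i (k+1)
    else gen n i j

/-- `φ_{σ_k}` for the letter `(k, true)` and `φ_{σ_k⁻¹}` for the letter `(k, false)`. -/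
noncomputable def phiLetter (n : ℕ) (l : ℕ × Bool) : FA n →ₐ[ℤ] FA n :=
  FreeAlgebra.lift ℤ fun g : Idx n =>
    if l.2 then phiGenImg n l.1 g.val.1 g.val.2 else phiInvGenImg n l.1 g.val.1 g.val.2

/-- `φ_β` for a word `β` in the letters `σ_k^{±1}`, with `φ_{β₁β₂} = φ_{β₁} ∘ φ_{β₂}`. -/
noncomputable def phiWord (n : ℕ) (w : List (ℕ × Bool)) : FA n →ₐ[ℤ] FA n :=
  w.foldr (fun l f => (phiLetter n l).comp f) (AlgHom.id ℤ (FA n))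

/-- `β` is a word in the generators `σ_1^{±1}, …, σ_{n−1}^{±1}` of the braid group `B_n`. -/
def WordIn (n : ℕ) (w : List (ℕ × Bool)) : Prop := ∀ l ∈ w, 1 ≤ l.1 ∧ l.1 + 1 ≤ n

/-- The natural inclusion `𝒜ₙ → 𝒜ₙ₊₁`. -/
noncomputable def incl (n : ℕ) : FA n →ₐ[ℤ] FA (n+1) :=
  FreeAlgebra.lift ℤ fun g : Idx n => gen (n+1) g.val.1 g.val.2

/-- `M` (a matrix recorded as a function `ℕ → ℕ → 𝒜ₙ`, supported on `[1,n] × [1,n]`)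
is the matrix `Φ^L_β`:  `φ*_β(a_{i,n+1}) = ∑_j M_{ij} a_{j,n+1}`. -/
def IsPhiL (n : ℕ) (w : List (ℕ × Bool)) (M : ℕ → ℕ → FA n) : Prop :=
  (∀ i j, i ∉ Finset.Icc 1 n ∨ j ∉ Finset.Icc 1 n → M i j = 0) ∧
  ∀ i ∈ Finset.Icc 1 n,
    phiWord (n+1) w (gen (n+1) i (n+1)) =
      ∑ j ∈ Finset.Icc 1 n, incl n (M i j) * gen (n+1) j (n+1)

/-- `M` is the matrix `Φ^R_β`:  `φ*_β(a_{n+1,i}) = ∑_j a_{n+1,j} M_{ji}`. -/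
def IsPhiR (n : ℕ) (w : List (ℕ × Bool)) (M : ℕ → ℕ → FA n) : Prop :=
  (∀ i j, i ∉ Finset.Icc 1 n ∨ j ∉ Finset.Icc 1 n → M i j = 0) ∧
  ∀ i ∈ Finset.Icc 1 n,
    phiWord (n+1) w (gen (n+1) (n+1) i) =
      ∑ j ∈ Finset.Icc 1 n, gen (n+1) (n+1) j * incl n (M j i)

/-- The permutation (of `ℕ`, via 1-based strand labels) determined by a braid word,
with `perm (w₁ ++ w₂) = perm w₁ * perm w₂`. -/
def permWord (w : List (ℕ × Bool)) : Equiv.Perm ℕ :=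
  w.foldr (fun l f => Equiv.swap l.1 (l.1 + 1) * f) 1

/-- The writhe (exponent sum) of a braid word. -/
def writhe (w : List (ℕ × Bool)) : ℤ :=
  (w.map fun l => if l.2 then (1 : ℤ) else -1).sum

/-- Conjugation, as an algebra map to the opposite algebra. -/
noncomputable def conjHom (n : ℕ) : FA n →ₐ[ℤ] (FA n)ᵐᵒᵖ :=
  FreeAlgebra.lift ℤ fun g : Idx n => MulOpposite.op (gen n g.val.2 g.val.1)

/-- Conjugation `x ↦ x̄`: the `ℤ`-linear anti-automorphism with `a_{ij} ↦ a_{ji}`. -/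
noncomputable def conj (n : ℕ) (x : FA n) : FA n := (conjHom n x).unop

/-- Conjugation as a `ℤ`-linear map. -/
noncomputable def conjLin (n : ℕ) : FA n →ₗ[ℤ] FA n :=
  (MulOpposite.opLinearEquiv ℤ).symm.toLinearMap ∘ₗ (conjHom n).toLinearMap

/-- The word `τ_{a,p} = σ_a σ_{a+1} ⋯ σ_{a+p−1}`. -/
def tauWord (a p : ℕ) : List (ℕ × Bool) := (List.range p).map fun t => (a + t, true)

/-- The word `κ_{a,l} = τ_{a+l−1,p} τ_{a+l−2,p} ⋯ τ_{a,p}`. -/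
def kappaWord (a l p : ℕ) : List (ℕ × Bool) :=
  (((List.range l).reverse).map fun t => tauWord (a + t) p).flatten

/-- The inverse of a braid word. -/
def invWord (w : List (ℕ × Bool)) : List (ℕ × Bool) := w.reverse.map fun l => (l.1, !l.2)

/-- The `p`-cable `α^{(p)}` of a braid word `α` (each strand replaced by `p` parallel strands):
substitute `σ_m ↦ κ_{(m−1)p+1,p}` and `σ_m⁻¹ ↦ κ_{(m−1)p+1,p}⁻¹`. -/
def cable (p : ℕ) (w : List (ℕ × Bool)) : List (ℕ × Bool) :=
  (w.map fun l =>
    if l.2 then kappaWord ((l.1 - 1) * p + 1) p p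
    else invWord (kappaWord ((l.1 - 1) * p + 1) p p)).flatten

/-- The product `a_{x₁x₂} a_{x₂x₃} ⋯ a_{x_{m-1}x_m}` along a list `[x₁, …, x_m]`
(`1` for lists of length `≤ 1`). -/
noncomputable def pathFactors (n : ℕ) : List ℕ → FA n
  | x :: y :: rest => gen n x y * pathFactors n (y :: rest)
  | _ => 1

/-- `A(i,j,X) = Σ_{Y ⊆ X} (−1)^{|Y|} a_{i y₁} a_{y₁ y₂} ⋯ a_{y_k j}` (ascending order on `Y`). -/
noncomputable def Aexp (n i j : ℕ) (X : Finset ℕ) : FA n :=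
  ∑ Y ∈ X.powerset, ((-1 : ℤ) ^ Y.card) • pathFactors n (i :: (Y.sort (· ≤ ·) ++ [j]))

/-- `A'(i,j,X) = Σ_{Y ⊆ X} (−1)^{|Y|} a_{i y_k} a_{y_k y_{k−1}} ⋯ a_{y₁ j}` (descending order). -/
noncomputable def A'exp (n i j : ℕ) (X : Finset ℕ) : FA n :=
  ∑ Y ∈ X.powerset, ((-1 : ℤ) ^ Y.card) • pathFactors n (i :: ((Y.sort (· ≤ ·)).reverse ++ [j]))

/-- `B'(i,j,X) = Σ_{Y ⊆ X, min Y ≠ j} c_Y a_{i y_k} ⋯ a_{y₁ j}`, where `c_Y = (−1)^{|Y|+1}` if all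
elements of `Y` exceed `j` (including `Y = ∅`), and `c_Y = (−1)^{|Y|}` otherwise. -/
noncomputable def B'exp (n i j : ℕ) (X : Finset ℕ) : FA n :=
  ∑ Y ∈ X.powerset.filter (fun Y => Y.min ≠ (j : WithTop ℕ)),
    (if ∀ y ∈ Y, j < y then ((-1 : ℤ) ^ (Y.card + 1)) else ((-1 : ℤ) ^ Y.card)) •
      pathFactors n (i :: ((Y.sort (· ≤ ·)).reverse ++ [j]))

/-- For `i = (q_i − 1)p + r_i` with `1 ≤ r_i ≤ p`: the quotient `q_i`. -/
def qIdx (p i : ℕ) : ℕ := (i - 1) / p + 1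

/-- For `i = (q_i − 1)p + r_i` with `1 ≤ r_i ≤ p`: the remainder `r_i`. -/
def rIdx (p i : ℕ) : ℕ := (i - 1) % p + 1

/-- The homomorphism `ψ : 𝒜_{kp} → 𝒜_k ⊗ 𝒜_p`. -/
noncomputable def psi (k p : ℕ) : FA (k * p) →ₐ[ℤ] @TensorProduct ℤ _ (FA k) (FA p) _ _ Algebra.toModule Algebra.toModule :=
  FreeAlgebra.lift ℤ fun g : Idx (k * p) =>
    if qIdx p g.val.1 = qIdx p g.val.2 then
      (1 : FA k) ⊗ₜ[ℤ] gen p (rIdx p g.val.1) (rIdx p g.val.2)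
    else if rIdx p g.val.1 = rIdx p g.val.2 then
      gen k (qIdx p g.val.1) (qIdx p g.val.2) ⊗ₜ[ℤ] (1 : FA p)
    else if (qIdx p g.val.1 < qIdx p g.val.2 ∧ rIdx p g.val.2 < rIdx p g.val.1) ∨
            (qIdx p g.val.2 < qIdx p g.val.1 ∧ rIdx p g.val.1 < rIdx p g.val.2) then 0
    else gen k (qIdx p g.val.1) (qIdx p g.val.2) ⊗ₜ[ℤ] gen p (rIdx p g.val.1) (rIdx p g.val.2)

/-- `ψ*(x · a_{i,*}) = ψ(x) · (a_{q_i,*} ⊗ a_{r_i,*})`, the image of the element `x · a_{i,*}`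
of `𝒜_{kp}^L` under `ψ* : 𝒜_{kp}^L → 𝒜_k^L ⊗ 𝒜_p^L`, the target realized inside
`𝒜_{k+1} ⊗ 𝒜_{p+1}`. -/
noncomputable def psiStarElt (k p : ℕ) (x : FA (k * p)) (i : ℕ) :
    @TensorProduct ℤ _ (FA (k+1)) (FA (p+1)) _ _ Algebra.toModule Algebra.toModule :=
  (Algebra.TensorProduct.map (incl k) (incl p)) (psi k p x) *
    (gen (k+1) (qIdx p i) (k+1) ⊗ₜ[ℤ] gen (p+1) (rIdx p i) (p+1) :
      @TensorProduct ℤ _ (FA (k+1)) (FA (p+1)) _ _ Algebra.toModule Algebra.toModule)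

/-- The `(i,j)` entry of `Δ(β) = diag[(−1)^{w(β)}, 1, …, 1]` (1-based indices). -/
noncomputable def deltaEnt (w : List (ℕ × Bool)) (i j : ℕ) : ℂ :=
  if i = j then (if i = 1 then (-1 : ℂ) ^ writhe w else 1) else 0

/-- Generators `σ_k`, `1 ≤ k ≤ n−1`, of the braid group `B_n`. -/
abbrev BGen (n : ℕ) : Type := {k : ℕ // 1 ≤ k ∧ k + 1 ≤ n}

/-- The braid relations of `B_n`. -/
def braidRels (n : ℕ) : Set (FreeGroup (BGen n)) :=
  {r | (∃ a b : BGen n, a.1 + 1 = b.1 ∧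
          r = FreeGroup.of a * FreeGroup.of b * FreeGroup.of a *
              (FreeGroup.of b)⁻¹ * (FreeGroup.of a)⁻¹ * (FreeGroup.of b)⁻¹) ∨
       (∃ a b : BGen n, a.1 + 2 ≤ b.1 ∧
          r = FreeGroup.of a * FreeGroup.of b * (FreeGroup.of a)⁻¹ * (FreeGroup.of b)⁻¹)}

/-- The braid group `B_n`, presented by the Artin generators and braid relations. -/
abbrev BraidGroup (n : ℕ) := PresentedGroup (braidRels n)

/-! An algebra map out of the free algebra `𝒜ₙ` is determined by the images of the `a_{ij}`, so
each relation between the `φ_{σ_k}` is checked on generators, by cases on where `i` and `j` sit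
relative to the strands the letters move; in every case both sides expand to the same
noncommutative polynomial. Since `φ_{σ_k⁻¹}` inverts `φ_{σ_k}`, these are automorphisms, and the
braid relations let `σ_k ↦ φ_{σ_k}` descend from the free group to `B_n`. -/

theorem gen_eq_ι {n i j : ℕ} (h : i ≠ j ∧ 1 ≤ i ∧ i ≤ n ∧ 1 ≤ j ∧ j ≤ n) :
    gen n i j = FreeAlgebra.ι ℤ (⟨(i, j), h⟩ : Idx n) :=
  dif_pos h

theorem FA.hom_ext {A : Type*} [Semiring A] [Algebra ℤ A] {n : ℕ} {f g : FA n →ₐ[ℤ] A}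
    (h : ∀ i j, i ≠ j → 1 ≤ i → i ≤ n → 1 ≤ j → j ≤ n → f (gen n i j) = g (gen n i j)) :
    f = g := by
  refine FreeAlgebra.hom_ext (funext fun ⟨⟨i, j⟩, hg⟩ => ?_)
  simpa only [Function.comp_apply, ← gen_eq_ι hg] using
    h i j hg.1 hg.2.1 hg.2.2.1 hg.2.2.2.1 hg.2.2.2.2

section PhiLetter

variable {n : ℕ}

theorem phiLetter_true_gen {i j : ℕ} (k : ℕ) (hij : i ≠ j) (hi : 1 ≤ i) (hin : i ≤ n)
    (hj : 1 ≤ j) (hjn : j ≤ n) : phiLetter n (k, true) (gen n i j) = phiGenImg n k i j := by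
  rw [gen_eq_ι ⟨hij, hi, hin, hj, hjn⟩, phiLetter, FreeAlgebra.lift_ι_apply, if_pos rfl]

theorem phiLetter_false_gen {i j : ℕ} (k : ℕ) (hij : i ≠ j) (hi : 1 ≤ i) (hin : i ≤ n)
    (hj : 1 ≤ j) (hjn : j ≤ n) : phiLetter n (k, false) (gen n i j) = phiInvGenImg n k i j := by
  rw [gen_eq_ι ⟨hij, hi, hin, hj, hjn⟩, phiLetter, FreeAlgebra.lift_ι_apply,
    if_neg Bool.false_ne_true]

theorem phiLetter_comp_phiLetter_not {k : ℕ} (hk : 1 ≤ k) (hkn : k + 1 ≤ n) (b : Bool) :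
    (phiLetter n (k, b)).comp (phiLetter n (k, !b)) = AlgHom.id ℤ (FA n) := by
  refine FA.hom_ext fun i j hij hi hin hj hjn => ?_
  simp only [AlgHom.comp_apply, AlgHom.id_apply]
  have hi_cases : i = k ∨ i = k + 1 ∨ (i ≠ k ∧ i ≠ k + 1) := by omega
  have hj_cases : j = k ∨ j = k + 1 ∨ (j ≠ k ∧ j ≠ k + 1) := by omega
  cases b <;>
  rcases hi_cases with rfl | rfl | ⟨hik, hik'⟩ <;>
  rcases hj_cases with rfl | rfl | ⟨hjk, hjk'⟩ <;>
  first
    | exact absurd rfl hij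
    | simp (disch := omega) only [Bool.not_true, Bool.not_false, phiLetter_true_gen,
        phiLetter_false_gen, phiGenImg, phiInvGenImg, if_pos, if_neg, if_true, map_mul, map_sub,
        map_neg, neg_neg] <;>
      noncomm_ring

theorem phiLetter_braid {k : ℕ} (hk : 1 ≤ k) (hkn : k + 2 ≤ n) :
    (phiLetter n (k, true)).comp ((phiLetter n (k + 1, true)).comp (phiLetter n (k, true))) =
    (phiLetter n (k + 1, true)).comp ((phiLetter n (k, true)).comp (phiLetter n (k + 1, true))) := by
  refine FA.hom_ext fun i j hij hi hin hj hjn => ?_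
  simp only [AlgHom.comp_apply]
  have hi_cases : i = k ∨ i = k + 1 ∨ i = k + 2 ∨ (i ≠ k ∧ i ≠ k + 1 ∧ i ≠ k + 2) := by omega
  have hj_cases : j = k ∨ j = k + 1 ∨ j = k + 2 ∨ (j ≠ k ∧ j ≠ k + 1 ∧ j ≠ k + 2) := by omega
  rcases hi_cases with rfl | rfl | rfl | ⟨hik, hik', hik''⟩ <;>
  rcases hj_cases with rfl | rfl | rfl | ⟨hjk, hjk', hjk''⟩ <;>
  first
    | exact absurd rfl hij
    | simp (disch := omega) only [phiLetter_true_gen, phiGenImg, if_pos, if_neg, if_true, map_mul,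
        map_sub, map_neg] <;>
      noncomm_ring

theorem phiLetter_comm {a b : ℕ} (ha : 1 ≤ a) (hab : a + 2 ≤ b) (hbn : b + 1 ≤ n) :
    (phiLetter n (a, true)).comp (phiLetter n (b, true)) =
    (phiLetter n (b, true)).comp (phiLetter n (a, true)) := by
  refine FA.hom_ext fun i j hij hi hin hj hjn => ?_
  simp only [AlgHom.comp_apply]
  have hi_cases : i = a ∨ i = a + 1 ∨ i = b ∨ i = b + 1 ∨
      (i ≠ a ∧ i ≠ a + 1 ∧ i ≠ b ∧ i ≠ b + 1) := by omega
  have hj_cases : j = a ∨ j = a + 1 ∨ j = b ∨ j = b + 1 ∨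
      (j ≠ a ∧ j ≠ a + 1 ∧ j ≠ b ∧ j ≠ b + 1) := by omega
  rcases hi_cases with rfl | rfl | rfl | rfl | ⟨hia, hia', hib, hib'⟩ <;>
  rcases hj_cases with rfl | rfl | rfl | rfl | ⟨hja, hja', hjb, hjb'⟩ <;>
  first
    | exact absurd rfl hij
    | simp (disch := omega) only [phiLetter_true_gen, phiGenImg, if_pos, if_neg, if_true, map_mul,
        map_sub, map_neg] <;>
      noncomm_ring

noncomputable def phiAut (g : BGen n) : FA n ≃ₐ[ℤ] FA n :=
  AlgEquiv.ofAlgHom (phiLetter n (g.1, true)) (phiLetter n (g.1, false))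
    (phiLetter_comp_phiLetter_not g.2.1 g.2.2 true) (phiLetter_comp_phiLetter_not g.2.1 g.2.2 false)

theorem phiAut_braid {a b : BGen n} (hab : a.1 + 1 = b.1) :
    phiAut a * phiAut b * phiAut a = phiAut b * phiAut a * phiAut b := by
  obtain ⟨k, hk, hkn⟩ := a
  obtain ⟨_, _, hbn⟩ := b
  subst hab
  exact AlgEquiv.ext fun x => AlgHom.congr_fun (phiLetter_braid hk hbn) x

theorem phiAut_comm {a b : BGen n} (hab : a.1 + 2 ≤ b.1) :
    phiAut a * phiAut b = phiAut b * phiAut a :=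
  AlgEquiv.ext fun x => AlgHom.congr_fun (phiLetter_comm a.2.1 hab b.2.2) x

theorem lift_phiAut_braidRels : ∀ r ∈ braidRels n, FreeGroup.lift (phiAut (n := n)) r = 1 := by
  rintro r (⟨a, b, hab, rfl⟩ | ⟨a, b, hab, rfl⟩) <;>
    simp only [map_mul, map_inv, FreeGroup.lift_apply_of]
  · rw [phiAut_braid hab]
    group
  · rw [phiAut_comm hab]
    group

end PhiLetter

theorem phi_braid_relations_general (n : ℕ) :
    (∀ k, 1 ≤ k → k + 2 ≤ n →
      (phiLetter n (k, true)).comp ((phiLetter n (k+1, true)).comp (phiLetter n (k, true))) =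
      (phiLetter n (k+1, true)).comp ((phiLetter n (k, true)).comp (phiLetter n (k+1, true)))) ∧
    (∀ i j, 1 ≤ i → i + 1 ≤ n → 1 ≤ j → j + 1 ≤ n → (i + 2 ≤ j ∨ j + 2 ≤ i) →
      (phiLetter n (i, true)).comp (phiLetter n (j, true)) =
      (phiLetter n (j, true)).comp (phiLetter n (i, true))) ∧
    (∃ Φ : BraidGroup n →* (FA n ≃ₐ[ℤ] FA n),
      ∀ g : BGen n, ∀ x : FA n, (Φ (PresentedGroup.of g)) x = phiLetter n (g.1, true) x) := by
  refine ⟨fun k hk hkn => phiLetter_braid hk hkn, fun i j hi hin hj hjn hij => ?_,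
    PresentedGroup.toGroup lift_phiAut_braidRels, fun g x => ?_⟩
  · rcases hij with hij | hij
    · exact phiLetter_comm hi hij hjn
    · exact (phiLetter_comm hj hij hin).symm
  · rw [PresentedGroup.toGroup.of]
    rfl

/-- The endomorphisms `φ_{σ_k}` of `𝒜ₙ` satisfy the braid relations:
`φ_{σ_k} ∘ φ_{σ_{k+1}} ∘ φ_{σ_k} = φ_{σ_{k+1}} ∘ φ_{σ_k} ∘ φ_{σ_{k+1}}` for `1 ≤ k ≤ n−2`,
and `φ_{σ_i} ∘ φ_{σ_j} = φ_{σ_j} ∘ φ_{σ_i}` for `|i − j| ≥ 2`; consequently `σ_k ↦ φ_{σ_k}`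
induces a group homomorphism `B_n → Aut(𝒜ₙ)`. -/
theorem phi_braid_relations (n : ℕ) (hn : 2 ≤ n) :
    (∀ k, 1 ≤ k → k + 2 ≤ n →
      (phiLetter n (k, true)).comp ((phiLetter n (k+1, true)).comp (phiLetter n (k, true))) =
      (phiLetter n (k+1, true)).comp ((phiLetter n (k, true)).comp (phiLetter n (k+1, true)))) ∧
    (∀ i j, 1 ≤ i → i + 1 ≤ n → 1 ≤ j → j + 1 ≤ n → (i + 2 ≤ j ∨ j + 2 ≤ i) →
      (phiLetter n (i, true)).comp (phiLetter n (j, true)) =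
      (phiLetter n (j, true)).comp (phiLetter n (i, true))) ∧
    (∃ Φ : BraidGroup n →* (FA n ≃ₐ[ℤ] FA n),
      ∀ g : BGen n, ∀ x : FA n, (Φ (PresentedGroup.of g)) x = phiLetter n (g.1, true) x) :=
  phi_braid_relations_general n
end

section
/- For every word β in the generators σ_1^{±1}, …, σ_{n−1}^{±1} of B_n and all 1 ≤ i, j ≤ n, (Φ^R_β)_{ij} is the conjugate of (Φ^L_β)_{ji}; that is, Φ^R_β is the transpose of the entrywise conjugate of Φ^L_β. -/
open scoped TensorProduct

/-!
Conjugation commutes with every `φ_{σ_k}^{±1}` (it suffices to check this on the generators,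
where it is the symmetry `conj (φ(a_{ij})) = φ(a_{ji})` of the defining formulas) and with the
inclusion `𝒜ₙ → 𝒜ₙ₊₁`. Conjugating the identity defining `Φ^L_β` therefore expresses
`φ*_β(a_{n+1,j})` as `∑_m a_{n+1,m} conj (Φ^L_β)_{jm}`, and the coefficients of such a sum are
uniquely determined.
-/

open Finset MulOpposite

theorem lift_gen {n : ℕ} {A : Type*} [Semiring A] [Algebra ℤ A] (f : Idx n → A) (i j : ℕ) :
    FreeAlgebra.lift ℤ f (gen n i j) =
      if h : i ≠ j ∧ 1 ≤ i ∧ i ≤ n ∧ 1 ≤ j ∧ j ≤ n then f ⟨(i, j), h⟩ else 0 := by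
  unfold gen
  split_ifs
  · exact FreeAlgebra.lift_ι_apply _ _
  · exact map_zero _

theorem ι_eq_gen {n : ℕ} (g : Idx n) : FreeAlgebra.ι ℤ g = gen n g.val.1 g.val.2 := by
  rw [gen, dif_pos g.prop]

section Conj

variable {n : ℕ}

theorem conjHom_gen (i j : ℕ) : conjHom n (gen n i j) = op (gen n j i) := by
  rw [conjHom, lift_gen]
  split_ifs with h
  · rfl
  · rw [gen, dif_neg fun h' => h ⟨h'.1.symm, h'.2.2.2.1, h'.2.2.2.2, h'.2.1, h'.2.2.1⟩, op_zero]

theorem conj_gen (i j : ℕ) : conj n (gen n i j) = gen n j i := by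
  rw [conj, conjHom_gen, unop_op]

theorem conj_zero : conj n 0 = 0 := by simp [conj]

theorem conj_sum {ι : Type*} (s : Finset ι) (f : ι → FA n) :
    conj n (∑ m ∈ s, f m) = ∑ m ∈ s, conj n (f m) := by
  simp [conj, unop_sum]

theorem conj_map_of_conj_map_gen {m : ℕ} (f : FA n →ₐ[ℤ] FA m)
    (hf : ∀ g : Idx n, conj m (f (gen n g.val.1 g.val.2)) = f (gen n g.val.2 g.val.1))
    (x : FA n) : conj m (f x) = f (conj n x) := by
  have hcomp : (conjHom m).comp f = (AlgHom.op f).comp (conjHom n) :=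
    FreeAlgebra.hom_ext <| funext fun g => by
      change conjHom m (f (FreeAlgebra.ι ℤ g)) = AlgHom.op f (conjHom n (FreeAlgebra.ι ℤ g))
      rw [ι_eq_gen, conjHom_gen]
      exact congrArg op (hf g)
  exact congrArg unop (AlgHom.congr_fun hcomp x)

theorem conj_phiGenImg (k i j : ℕ) (hij : i ≠ j) :
    conj n (phiGenImg n k i j) = phiGenImg n k j i := by
  unfold phiGenImg
  split_ifs <;> first | omega | simp [conj, conjHom_gen]

theorem conj_phiInvGenImg (k i j : ℕ) (hij : i ≠ j) :
    conj n (phiInvGenImg n k i j) = phiInvGenImg n k j i := by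
  unfold phiInvGenImg
  split_ifs <;> first | omega | simp [conj, conjHom_gen]

theorem conj_phiLetter (l : ℕ × Bool) (x : FA n) :
    conj n (phiLetter n l x) = phiLetter n l (conj n x) := by
  refine conj_map_of_conj_map_gen _ (fun ⟨⟨i, j⟩, hij, hi, hin, hj, hjn⟩ => ?_) x
  have hij' : i ≠ j ∧ 1 ≤ i ∧ i ≤ n ∧ 1 ≤ j ∧ j ≤ n := ⟨hij, hi, hin, hj, hjn⟩
  have hji' : j ≠ i ∧ 1 ≤ j ∧ j ≤ n ∧ 1 ≤ i ∧ i ≤ n := ⟨hij.symm, hj, hjn, hi, hin⟩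
  rw [phiLetter, lift_gen, lift_gen, dif_pos hij', dif_pos hji']
  rcases l with ⟨k, _ | _⟩
  · exact conj_phiInvGenImg k i j hij
  · exact conj_phiGenImg k i j hij

theorem conj_phiWord (w : List (ℕ × Bool)) (x : FA n) :
    conj n (phiWord n w x) = phiWord n w (conj n x) := by
  induction w generalizing x with
  | nil => rfl
  | cons l w ih => exact (conj_phiLetter l _).trans (congrArg _ (ih x))

theorem incl_gen {i j : ℕ} (hi : i ≤ n) (hj : j ≤ n) : incl n (gen n i j) = gen (n + 1) i j := by
  rw [incl, lift_gen]
  split_ifs with h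
  · rfl
  · rw [gen, dif_neg fun h' => h ⟨h'.1, h'.2.1, hi, h'.2.2.2.1, hj⟩]

theorem conj_incl (x : FA n) : conj (n + 1) (incl n x) = incl n (conj n x) :=
  conj_map_of_conj_map_gen _ (fun ⟨_, _, _, hi, _, hj⟩ => by
    rw [incl_gen hi hj, conj_gen, incl_gen hj hi]) x

end Conj

/-- Sends `a_{n+1,k}` to the square-zero matrix `E₀₁`, the other generators involving `n + 1`
to `0`, and `𝒜ₙ` to scalar matrices, so that `∑_m a_{n+1,m} c_m` goes to `c_k E₀₁`. -/
noncomputable def coeffHom (n k : ℕ) : FA (n + 1) →ₐ[ℤ] Matrix (Fin 2) (Fin 2) (FA n) :=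
  FreeAlgebra.lift ℤ fun g : Idx (n + 1) =>
    if g.val.1 = n + 1 then (if g.val.2 = k then !![0, 1; 0, 0] else 0)
    else if g.val.2 = n + 1 then 0
    else Matrix.scalar (Fin 2) (gen n g.val.1 g.val.2)

theorem coeffHom_incl (n k : ℕ) (c : FA n) :
    coeffHom n k (incl n c) = Matrix.scalar (Fin 2) c := by
  have hcomp : (coeffHom n k).comp (incl n) = (Matrix.scalar (Fin 2)).toIntAlgHom :=
    FreeAlgebra.hom_ext <| funext fun ⟨⟨i, j⟩, hij, hi, hin, hj, hjn⟩ => by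
      change coeffHom n k (incl n (FreeAlgebra.ι ℤ _)) = Matrix.scalar (Fin 2) (FreeAlgebra.ι ℤ _)
      rw [ι_eq_gen, incl_gen hin hjn, coeffHom, lift_gen, dif_pos ⟨hij, hi, by omega, hj, by omega⟩]
      simp only [if_neg (show i ≠ n + 1 by omega), if_neg (show j ≠ n + 1 by omega)]
  exact AlgHom.congr_fun hcomp c

theorem coeffHom_gen_last (n k m : ℕ) (hm : m ∈ Icc 1 n) :
    coeffHom n k (gen (n + 1) (n + 1) m) = if m = k then !![0, 1; 0, 0] else 0 := by
  rw [mem_Icc] at hm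
  rw [coeffHom, lift_gen, dif_pos ⟨by omega, by omega, by omega, by omega, by omega⟩, if_pos rfl]

theorem coeffHom_sum_gen_last_mul_incl (n k : ℕ) (hk : k ∈ Icc 1 n) (c : ℕ → FA n) :
    coeffHom n k (∑ m ∈ Icc 1 n, gen (n + 1) (n + 1) m * incl n (c m)) 0 1 = c k := by
  rw [map_sum, Matrix.sum_apply, sum_eq_single_of_mem k hk]
  · simp [coeffHom_incl, coeffHom_gen_last n k k hk, Matrix.mul_apply]
  · intro m hm hmk
    simp [coeffHom_gen_last n k m hm, hmk]

theorem eq_of_sum_gen_last_mul_incl_eq {n : ℕ} {c d : ℕ → FA n}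
    (h : ∑ m ∈ Icc 1 n, gen (n + 1) (n + 1) m * incl n (c m) =
      ∑ m ∈ Icc 1 n, gen (n + 1) (n + 1) m * incl n (d m))
    {k : ℕ} (hk : k ∈ Icc 1 n) : c k = d k := by
  rw [← coeffHom_sum_gen_last_mul_incl n k hk c, h, coeffHom_sum_gen_last_mul_incl n k hk d]

theorem IsPhiL.phiWord_gen_last {n : ℕ} {w : List (ℕ × Bool)} {M : ℕ → ℕ → FA n}
    (hL : IsPhiL n w M) {j : ℕ} (hj : j ∈ Icc 1 n) :
    phiWord (n + 1) w (gen (n + 1) (n + 1) j) =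
      ∑ m ∈ Icc 1 n, gen (n + 1) (n + 1) m * incl n (conj n (M j m)) := by
  rw [← conj_gen, ← conj_phiWord, hL.2 j hj, conj_sum]
  refine sum_congr rfl fun m _ => ?_
  change unop (conjHom (n + 1) (_ * _)) = _
  rw [map_mul, unop_mul, conjHom_gen, unop_op]
  exact congrArg _ (conj_incl _)

theorem PhiR_eq_conj_transpose_PhiL_general (n : ℕ) (w : List (ℕ × Bool))
    (M M' : ℕ → ℕ → FA n) (hL : IsPhiL n w M) (hR : IsPhiR n w M') :
    ∀ i j, M' i j = conj n (M j i) := by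
  intro i j
  by_cases hi : i ∈ Icc 1 n
  · by_cases hj : j ∈ Icc 1 n
    · exact eq_of_sum_gen_last_mul_incl_eq ((hR.2 j hj).symm.trans (hL.phiWord_gen_last hj)) hi
    · rw [hR.1 i j (Or.inr hj), hL.1 j i (Or.inl hj), conj_zero]
  · rw [hR.1 i j (Or.inl hi), hL.1 j i (Or.inr hi), conj_zero]

/-- `Φ^R_β` is the transpose of the entrywise conjugate of `Φ^L_β`. -/
theorem PhiR_eq_conj_transpose_PhiL (n : ℕ) (w : List (ℕ × Bool)) (hw : WordIn n w)
    (M M' : ℕ → ℕ → FA n) (hL : IsPhiL n w M) (hR : IsPhiR n w M') :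
    ∀ i j, M' i j = conj n (M j i) :=
  PhiR_eq_conj_transpose_PhiL_general n w M M' hL hR
end
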